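/- The combinatorial identity Σ_{m=0}^{k} (1/([k+a+1]_a · (m+a)! · (k-m)!)) · X^{m,k-m}(λ₁,λ₂) = (1/k!) ∫_{0<t₁<⋯<t_a<1} d^a t ∫_{0<s₁<⋯<s_a<1} d^a s · s₁ · X^k(t₁s₁λ₁ + s₁λ₂) holds, where [x]_a denotes the falling factorial and X^{m,n}(λ₁,λ₂) are the doubly-graded symmetrized monomials in the free algebra. -/

import Mathlib

/-!
The right-hand side is the paper's double simplex integral with the binomial expansion
`X^k(tsλ₁ + sλ₂) = Σ_m C(k,m) t^m s^k X^{m,k-m}(λ₁,λ₂)` pulled out of the integrals, so only the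
scalar integrals `∫_{Δ_a} t₁^n` remain.

Integrating out the smallest coordinate `t₁ ∈ [0, t₂]` turns `∫_{Δ_{a+1}} t₁^n` into
`(n+1)⁻¹ ∫_{Δ_a} t₂^{n+1}`, so `∫_{Δ_a} t₁^n = n!/(n+a)!` by induction on `a`. The identity then
holds coefficientwise, because `C(k,m) · m!/(m+a)! · (k+1)!/(k+a+1)! / k! = 1/([k+a+1]_a (m+a)! (k-m)!)`.
-/

noncomputable section

open MeasureTheory
open scoped BigOperators

abbrev FA := FreeAlgebra ℂ (Fin 2)

def Xg (i : Fin 2) : FA := FreeAlgebra.ι ℂ i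

def Xs (l : ℂ × ℂ) : FA := l.1 • Xg 0 + l.2 • Xg 1

/-- the doubly-graded symmetrized monomial `X^{k,l}(λ₁,λ₂)` -/
def Xkl (l₁ l₂ : ℂ × ℂ) (k l : ℕ) : FA :=
  ((Nat.choose (k + l) k : ℂ))⁻¹ •
    ∑ S ∈ Finset.powersetCard k (Finset.univ : Finset (Fin (k + l))),
      (List.ofFn fun i => if i ∈ S then Xs l₁ else Xs l₂).prod

/-- the (closed) standard ordered simplex {0 ≤ t₁ ≤ ⋯ ≤ t_a ≤ 1} in ℝ^a -/
def simplex (a : ℕ) : Set (Fin a → ℝ) :=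
  {t | (∀ i j : Fin a, i ≤ j → t i ≤ t j) ∧ ∀ i, t i ∈ Set.Icc (0 : ℝ) 1}

/-- the first (smallest) coordinate `t₁`; by convention equal to 1 when a = 0 -/
def headVal {a : ℕ} (t : Fin a → ℝ) : ℝ := if h : 0 < a then t ⟨0, h⟩ else 1

lemma measurableSet_simplex (a : ℕ) : MeasurableSet (simplex a) := by
  simp only [simplex, Set.ofPred_and, Set.ofPred_forall]
  measurability

lemma measurable_headVal (a : ℕ) : Measurable (headVal (a := a)) := by
  unfold headVal
  split
  · exact measurable_pi_apply _
  · exact measurable_const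

lemma headVal_mem_Icc {a : ℕ} {t : Fin a → ℝ} (ht : t ∈ simplex a) :
    headVal t ∈ Set.Icc (0 : ℝ) 1 := by
  unfold headVal
  split
  · exact ht.2 _
  · exact ⟨zero_le_one, le_rfl⟩

lemma headVal_le {a : ℕ} {t : Fin a → ℝ} (ht : t ∈ simplex a) (i : Fin a) : headVal t ≤ t i := by
  have ha : 0 < a := i.pos
  simp only [headVal, dif_pos ha]
  exact ht.1 _ _ (Fin.mk_le_mk.2 (Nat.zero_le _))

lemma mem_simplex_succ {a : ℕ} (t : Fin (a + 1) → ℝ) :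
    t ∈ simplex (a + 1) ↔
      Fin.tail t ∈ simplex a ∧ t 0 ∈ Set.Icc (0 : ℝ) (headVal (Fin.tail t)) := by
  constructor
  · rintro ⟨hmono, hIcc⟩
    refine ⟨⟨fun i j hij => hmono i.succ j.succ (Fin.succ_le_succ_iff.2 hij),
      fun i => hIcc i.succ⟩, (hIcc 0).1, ?_⟩
    unfold headVal
    split
    · exact hmono 0 _ (Fin.zero_le _)
    · exact (hIcc 0).2
  · rintro ⟨htail, h0, hle⟩
    have hfirst : ∀ j, t 0 ≤ t j := Fin.cases le_rfl fun j => hle.trans (headVal_le htail j)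
    refine ⟨fun i j hij => ?_, Fin.cases ⟨h0, hle.trans (headVal_mem_Icc htail).2⟩ htail.2⟩
    cases i using Fin.cases with
    | zero => exact hfirst j
    | succ i =>
      cases j using Fin.cases with
      | zero => exact absurd (Fin.le_zero_iff.mp hij) (Fin.succ_ne_zero i)
      | succ j => exact htail.1 i j (Fin.succ_le_succ_iff.1 hij)

lemma setIntegral_simplex_succ_headVal_pow (a n : ℕ) :
    ∫ t in simplex (a + 1), headVal t ^ n =
      ∫ u in simplex a, ∫ x in (0 : ℝ)..headVal u, x ^ n := by
  set e := MeasurableEquiv.piFinSuccAbove (fun _ : Fin (a + 1) => ℝ) 0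
  set E : Set (ℝ × (Fin a → ℝ)) := {p | p.2 ∈ simplex a ∧ p.1 ∈ Set.Icc 0 (headVal p.2)}
  have hpre : simplex (a + 1) = e ⁻¹' E := Set.ext mem_simplex_succ
  have hE : MeasurableSet E :=
    (measurable_snd (measurableSet_simplex a)).inter
      ((measurableSet_le measurable_const measurable_fst).inter
        (measurableSet_le measurable_fst ((measurable_headVal a).comp measurable_snd)))
  have hEK : E ⊆ Set.Icc 0 1 ×ˢ Set.univ.pi fun _ => Set.Icc 0 1 := fun p hp =>
    ⟨⟨hp.2.1, hp.2.2.trans (headVal_mem_Icc hp.1).2⟩, fun i _ => hp.1.2 i⟩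
  have hint : IntegrableOn (fun p : ℝ × (Fin a → ℝ) => p.1 ^ n) E :=
    ((continuous_fst.pow n).continuousOn.integrableOn_compact
      (isCompact_Icc.prod (isCompact_univ_pi fun _ => isCompact_Icc))).mono_set hEK
  have hslice : ∀ u, (∫ x, E.indicator (fun p => p.1 ^ n) (x, u)) =
      (simplex a).indicator (fun u => ∫ x in (0 : ℝ)..headVal u, x ^ n) u := by
    intro u
    by_cases hu : u ∈ simplex a
    · have : (fun x => E.indicator (fun p => p.1 ^ n) (x, u)) =
          (Set.Icc 0 (headVal u)).indicator (· ^ n) := by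
        ext x
        simp only [Set.indicator, E, Set.mem_ofPred_eq, hu, true_and]
      rw [this, integral_indicator measurableSet_Icc, integral_Icc_eq_integral_Ioc,
        ← intervalIntegral.integral_of_le (headVal_mem_Icc hu).1, Set.indicator_of_mem hu]
    · simp [E, hu]
  calc ∫ t in simplex (a + 1), headVal t ^ n
      = ∫ t in e ⁻¹' E, (e t).1 ^ n := by
        rw [hpre]
        rfl
    _ = ∫ p in E, p.1 ^ n ∂(volume.prod volume) :=
        (measurePreserving_piFinSuccAbove (fun _ => volume) 0).setIntegral_preimage_emb
          e.measurableEmbedding (fun p => p.1 ^ n) E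
    _ = ∫ u, ∫ x, E.indicator (fun p => p.1 ^ n) (x, u) := by
        rw [← integral_indicator hE, integral_prod_symm _ ((integrable_indicator_iff hE).2 hint)]
    _ = ∫ u in simplex a, ∫ x in (0 : ℝ)..headVal u, x ^ n := by
        simp_rw [hslice, integral_indicator (measurableSet_simplex a)]

lemma setIntegral_simplex_headVal_pow (a n : ℕ) :
    ∫ t in simplex a, headVal t ^ n = (n.factorial : ℝ) / (n + a).factorial := by
  induction a generalizing n with
  | zero => simp [simplex, headVal, Measure.real, volume_pi, div_self, Nat.factorial_ne_zero]
  | succ a ih =>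
    rw [setIntegral_simplex_succ_headVal_pow]
    simp only [integral_pow, ne_eq, Nat.add_eq_zero_iff, one_ne_zero, and_false,
      not_false_eq_true, zero_pow, sub_zero]
    rw [integral_div, ih, Nat.add_right_comm n 1 a, ← add_assoc, Nat.factorial_succ n]
    push_cast
    field_simp

lemma inv_choose_mul_factorial_ratios {K : Type*} [Field K] [CharZero K] {a k m : ℕ} (hm : m ≤ k) :
    (k.factorial : K)⁻¹ * (k.choose m * (m.factorial / (m + a).factorial) *
        ((k + 1).factorial / (k + 1 + a).factorial)) =
      ((k + a + 1).descFactorial a * (m + a).factorial * (k - m).factorial : K)⁻¹ := by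
  have hchoose : (k.choose m * m.factorial * (k - m).factorial : K) = k.factorial := by
    exact_mod_cast Nat.choose_mul_factorial_mul_factorial hm
  have hdesc : ((k + 1).factorial * (k + a + 1).descFactorial a : K) = (k + 1 + a).factorial := by
    have := Nat.factorial_mul_descFactorial (n := k + a + 1) (k := a) (by omega)
    rw [show k + a + 1 - a = k + 1 by omega] at this
    rw [show k + 1 + a = k + a + 1 by omega]
    exact_mod_cast this
  have hf : ∀ n : ℕ, (n.factorial : K) ≠ 0 := fun n => by exact_mod_cast n.factorial_ne_zero
  have hd : ((k + a + 1).descFactorial a : K) ≠ 0 := by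
    exact_mod_cast (Nat.descFactorial_pos.2 (by omega)).ne'
  have := hf k; have := hf (m + a); have := hf (k - m); have := hf (k + 1 + a)
  field_simp
  linear_combination (k + 1).factorial * ((k + a + 1).descFactorial a : K) * hchoose +
    (k.factorial : K) * hdesc

theorem statement9 (a k : ℕ) (l₁ l₂ : ℂ × ℂ) :
    ∑ m ∈ Finset.range (k + 1),
        (((Nat.descFactorial (k + a + 1) a) * (m + a).factorial * (k - m).factorial : ℂ))⁻¹ •
          Xkl l₁ l₂ m (k - m) =
      ((k.factorial : ℂ))⁻¹ •
        ∑ m ∈ Finset.range (k + 1),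
          ((Nat.choose k m : ℂ) *
              (((∫ t in simplex a, headVal t ^ m) : ℝ) : ℂ) *
              (((∫ s in simplex a, headVal s ^ (k + 1)) : ℝ) : ℂ)) •
            Xkl l₁ l₂ m (k - m) := by
  rw [Finset.smul_sum]
  refine Finset.sum_congr rfl fun m hm => ?_
  rw [smul_smul, setIntegral_simplex_headVal_pow, setIntegral_simplex_headVal_pow]
  push_cast
  rw [inv_choose_mul_factorial_ratios (Nat.lt_succ_iff.1 (Finset.mem_range.1 hm))]

end
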